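/- arXiv:2002.08561 — 2 statements merged into one kernel-verified Lean document; each statement's English description precedes it below -/
import Mathlib

section
/- Let x* be a minimizer of (P₂): min_{x∈C} (1/2)‖Ax − b‖_q^q + ‖Ex‖⋆, with q > 1 and C polyhedral. Then z* is a minimizer of (P₂) if and only if z* is a minimizer of the BP-like problem (P₁): min ‖Ez‖⋆ subject to Az = Ax* and z ∈ C; moreover the optimal value of (P₁) equals ‖Ex*‖⋆. -/
/-!
Half the sum of two minimizers of `(P₂)` is feasible, and its cost is at most the average of
their costs, strictly so unless their images under `A` agree, because `u ↦ ∑ |uᵢ - bᵢ|^q` is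
strictly convex for `q > 1` and `‖E ·‖⋆` is convex. So `Ax` is the same for all minimizers,
the fidelity term is constant on them, and minimizing `(P₂)` amounts to minimizing `‖E ·‖⋆`
on the fibre `{z ∈ C | Az = Ax*}`.
-/

open Set

theorem strictConvexOn_abs_rpow {q : ℝ} (hq : 1 < q) :
    StrictConvexOn ℝ univ fun t : ℝ => |t| ^ q := by
  refine ⟨convex_univ, fun x _ y _ hxy a b ha hb hab => ?_⟩
  have hq0 : 0 < q := by linarith
  have habs : |a • x + b • y| ≤ a * |x| + b * |y| := by
    simpa [smul_eq_mul, abs_mul, abs_of_pos ha, abs_of_pos hb] using abs_add_le (a * x) (b * y)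
  by_cases hxy' : |x| = |y|
  · have hy : y = -x := by linarith [(abs_eq_abs.1 hxy').resolve_left hxy]
    have hx0 : x ≠ 0 := by rintro rfl; exact hxy (by simp [hy])
    have hlt : |a • x + b • y| < |x| := by
      rw [hy, smul_eq_mul, smul_eq_mul, show a * x + b * -x = (a - b) * x by ring, abs_mul]
      exact mul_lt_of_lt_one_left (abs_pos.2 hx0) (abs_sub_lt_iff.2 ⟨by linarith, by linarith⟩)
    calc |a • x + b • y| ^ q < |x| ^ q := Real.rpow_lt_rpow (abs_nonneg _) hlt hq0
      _ = a • |x| ^ q + b • |y| ^ q := by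
        rw [← hxy', smul_eq_mul, smul_eq_mul, ← add_mul, hab, one_mul]
  · calc |a • x + b • y| ^ q ≤ (a • |x| + b • |y|) ^ q :=
          Real.rpow_le_rpow (abs_nonneg _) habs hq0.le
      _ < a • |x| ^ q + b • |y| ^ q :=
          (strictConvexOn_rpow hq).2 (abs_nonneg x) (abs_nonneg y) hxy' ha hb hab

theorem strictConvexOn_abs_sub_rpow {q : ℝ} (hq : 1 < q) (c : ℝ) :
    StrictConvexOn ℝ univ fun t : ℝ => |t - c| ^ q := by
  simpa [Function.comp_def, neg_add_eq_sub] using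
    (strictConvexOn_abs_rpow hq).translate_right (-c)

theorem StrictConvexOn.const_mul {E : Type*} [AddCommMonoid E] [Module ℝ E] {s : Set E}
    {f : E → ℝ} (hf : StrictConvexOn ℝ s f) {c : ℝ} (hc : 0 < c) :
    StrictConvexOn ℝ s fun x => c * f x := by
  refine ⟨hf.1, fun x hx y hy hxy a b ha hb hab => ?_⟩
  have := mul_lt_mul_of_pos_left (hf.2 hx hy hxy ha hb hab) hc
  simp only [smul_eq_mul] at this ⊢
  linarith

theorem strictConvexOn_sum_apply {ι : Type*} [Fintype ι] {φ : ι → ℝ → ℝ}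
    (hφ : ∀ i, StrictConvexOn ℝ univ (φ i)) :
    StrictConvexOn ℝ univ fun u : ι → ℝ => ∑ i, φ i (u i) := by
  refine ⟨convex_univ, fun u _ v _ huv a b ha hb hab => ?_⟩
  obtain ⟨i₀, hi₀⟩ := Function.ne_iff.1 huv
  simp only [smul_eq_mul, Finset.mul_sum, ← Finset.sum_add_distrib, Pi.add_apply, Pi.smul_apply]
  exact Finset.sum_lt_sum (fun i _ => (hφ i).convexOn.2 trivial trivial ha.le hb.le hab)
    ⟨i₀, Finset.mem_univ _, (hφ i₀).2 trivial trivial hi₀ ha hb hab⟩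

theorem convex_setOf_mulVec_le {ι κ : Type*} [Fintype κ] (C : Matrix ι κ ℝ) (d : ι → ℝ) :
    Convex ℝ {x | ∀ i, C.mulVec x i ≤ d i} := by
  rw [ofPred_forall]
  exact convex_iInter fun i =>
    convex_halfSpace_le (LinearMap.proj (R := ℝ) i ∘ₗ C.mulVecLin).isLinear (d i)

section StrictConvexFidelity

variable {E F : Type*} [AddCommGroup E] [Module ℝ E] [AddCommGroup F] [Module ℝ F]
  {s : Set E} {L : E →ₗ[ℝ] F} {g : F → ℝ} {R : E → ℝ} {x z : E}

theorem map_eq_of_isMinOn_comp_add (hs : Convex ℝ s) (hg : StrictConvexOn ℝ univ g)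
    (hR : ConvexOn ℝ s R) (hx : x ∈ s) (hz : z ∈ s)
    (hxm : IsMinOn (fun y => g (L y) + R y) s x) (hzm : IsMinOn (fun y => g (L y) + R y) s z) :
    L x = L z := by
  by_contra hne
  have h2 : (0 : ℝ) < 1 / 2 := by norm_num
  have hw : (1 / 2 : ℝ) • x + (1 / 2 : ℝ) • z ∈ s := hs hx hz h2.le h2.le (by norm_num)
  have hgw := hg.2 trivial trivial hne h2 h2 (by norm_num)
  have hRw := hR.2 hx hz h2.le h2.le (by norm_num)
  have hxz := isMinOn_iff.1 hzm x hx
  have hxw := isMinOn_iff.1 hxm _ hw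
  simp only [map_add, map_smul, smul_eq_mul] at hgw hRw hxw
  linarith

theorem isMinOn_comp_add_iff (hs : Convex ℝ s) (hg : StrictConvexOn ℝ univ g)
    (hR : ConvexOn ℝ s R) (hx : x ∈ s) (hxm : IsMinOn (fun y => g (L y) + R y) s x) :
    (z ∈ s ∧ IsMinOn (fun y => g (L y) + R y) s z) ↔
      (z ∈ s ∧ L z = L x ∧ IsMinOn R (s ∩ {y | L y = L x}) z) := by
  constructor
  · rintro ⟨hz, hzm⟩
    have hLz := map_eq_of_isMinOn_comp_add hs hg hR hz hx hzm hxm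
    refine ⟨hz, hLz, isMinOn_iff.2 fun y ⟨hy, (hLy : L y = L x)⟩ => ?_⟩
    have := isMinOn_iff.1 hzm y hy
    rw [hLz, hLy] at this
    linarith
  · rintro ⟨hz, hLz, hzm⟩
    refine ⟨hz, isMinOn_iff.2 fun y hy => ?_⟩
    have hRzx := isMinOn_iff.1 hzm x ⟨hx, rfl⟩
    have hxy := isMinOn_iff.1 hxm y hy
    rw [hLz]
    linarith

theorem isLeast_setOf_fiber_of_isMinOn_comp_add (hx : x ∈ s)
    (hxm : IsMinOn (fun y => g (L y) + R y) s x) :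
    IsLeast {v | ∃ y ∈ s, L y = L x ∧ v = R y} (R x) := by
  refine ⟨⟨x, hx, rfl, rfl⟩, ?_⟩
  rintro v ⟨y, hy, hLy, rfl⟩
  have := isMinOn_iff.1 hxm y hy
  rw [hLy] at this
  linarith

end StrictConvexFidelity

theorem stmt5_general {m N r ℓ : ℕ} (q : ℝ) (hq : 1 < q)
    (A : Matrix (Fin m) (Fin N) ℝ) (b : Fin m → ℝ) (E : Matrix (Fin r) (Fin N) ℝ)
    (Cm : Matrix (Fin ℓ) (Fin N) ℝ) (d : Fin ℓ → ℝ)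
    (nstar : (Fin r → ℝ) → ℝ)
    (hns1 : ∀ u v, nstar (u + v) ≤ nstar u + nstar v)
    (hns2 : ∀ (c : ℝ) u, nstar (c • u) = |c| * nstar u)
    (𝒞 : Set (Fin N → ℝ)) (h𝒞 : 𝒞 = {x | ∀ i, Cm.mulVec x i ≤ d i})
    (J : (Fin N → ℝ) → ℝ)
    (hJ : J = fun x => (1/2) * (∑ i, |A.mulVec x i - b i| ^ q) + nstar (E.mulVec x))
    (xstar : Fin N → ℝ) (hxs : xstar ∈ 𝒞) (hxsm : ∀ y ∈ 𝒞, J xstar ≤ J y) :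
    (∀ z, (z ∈ 𝒞 ∧ ∀ y ∈ 𝒞, J z ≤ J y) ↔
      (z ∈ 𝒞 ∧ A.mulVec z = A.mulVec xstar ∧
        ∀ y, y ∈ 𝒞 → A.mulVec y = A.mulVec xstar →
          nstar (E.mulVec z) ≤ nstar (E.mulVec y))) ∧
    sInf {v : ℝ | ∃ z, z ∈ 𝒞 ∧ A.mulVec z = A.mulVec xstar ∧ v = nstar (E.mulVec z)}
      = nstar (E.mulVec xstar) := by
  set g : (Fin m → ℝ) → ℝ := fun u => 1 / 2 * ∑ i, |u i - b i| ^ q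
  obtain rfl : J = fun y => g (A.mulVecLin y) + nstar (E.mulVec y) := hJ
  have hs : Convex ℝ 𝒞 := h𝒞 ▸ convex_setOf_mulVec_le Cm d
  have hg : StrictConvexOn ℝ univ g :=
    (strictConvexOn_sum_apply fun i => strictConvexOn_abs_sub_rpow hq (b i)).const_mul
      (by norm_num)
  let nstarSeminorm : Seminorm ℝ (Fin r → ℝ) :=
    Seminorm.of nstar hns1 fun c u => by rw [hns2, Real.norm_eq_abs]
  have hR : ConvexOn ℝ 𝒞 fun x => nstar (E.mulVec x) :=
    (nstarSeminorm.convexOn.comp_linearMap E.mulVecLin).subset (subset_univ _) hs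
  have hxm : IsMinOn (fun y => g (A.mulVecLin y) + nstar (E.mulVec y)) 𝒞 xstar :=
    isMinOn_iff.2 hxsm
  refine ⟨fun z => ?_, (isLeast_setOf_fiber_of_isMinOn_comp_add hxs hxm).csInf_eq⟩
  simpa only [isMinOn_iff, mem_inter_iff, mem_ofPred_eq, and_imp, Matrix.mulVecLin_apply] using
    isMinOn_comp_add_iff (z := z) hs hg hR hxs hxm

/-- Let `xstar` be a minimizer of (P₂): min over 𝒞 of `(1/2)‖Ax−b‖_q^q + ‖Ex‖⋆`
with `q > 1`. Then `z` is a minimizer of (P₂) iff `z` is a minimizer of the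
BP-like problem (P₁): min `‖Ez‖⋆` s.t. `Az = A xstar`, `z ∈ 𝒞`; moreover the
optimal value of (P₁) equals `‖E xstar‖⋆`. -/
theorem stmt5 {m N r ℓ : ℕ} (q : ℝ) (hq : 1 < q)
    (A : Matrix (Fin m) (Fin N) ℝ) (b : Fin m → ℝ) (E : Matrix (Fin r) (Fin N) ℝ)
    (Cm : Matrix (Fin ℓ) (Fin N) ℝ) (d : Fin ℓ → ℝ)
    (nstar : (Fin r → ℝ) → ℝ)
    (hns1 : ∀ u v, nstar (u + v) ≤ nstar u + nstar v)
    (hns2 : ∀ (c : ℝ) u, nstar (c • u) = |c| * nstar u)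
    (hns3 : ∀ u, nstar u = 0 → u = 0)
    (𝒞 : Set (Fin N → ℝ)) (h𝒞 : 𝒞 = {x | ∀ i, Cm.mulVec x i ≤ d i})
    (J : (Fin N → ℝ) → ℝ)
    (hJ : J = fun x => (1/2) * (∑ i, |A.mulVec x i - b i| ^ q) + nstar (E.mulVec x))
    (xstar : Fin N → ℝ) (hxs : xstar ∈ 𝒞) (hxsm : ∀ y ∈ 𝒞, J xstar ≤ J y) :
    (∀ z, (z ∈ 𝒞 ∧ ∀ y ∈ 𝒞, J z ≤ J y) ↔
      (z ∈ 𝒞 ∧ A.mulVec z = A.mulVec xstar ∧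
        ∀ y, y ∈ 𝒞 → A.mulVec y = A.mulVec xstar →
          nstar (E.mulVec z) ≤ nstar (E.mulVec y))) ∧
    sInf {v : ℝ | ∃ z, z ∈ 𝒞 ∧ A.mulVec z = A.mulVec xstar ∧ v = nstar (E.mulVec z)}
      = nstar (E.mulVec xstar) :=
  stmt5_general q hq A b E Cm d nstar hns1 hns2 𝒞 h𝒞 J hJ xstar hxs hxsm
end

section
/- Let C be a polyhedral set, A ∈ ℝ^{m×N}, E ∈ ℝ^{r×N}, b ∈ ℝ^m with the feasible set {x : Ax = b, x ∈ C} nonempty. Then there exists ᾱ > 0 such that for all α ∈ (0, ᾱ], every minimizer of min ‖Ex‖₁ + (α/2)‖x‖₂² subject to Ax = b, x ∈ C, is also a minimizer of min ‖Ex‖₁ subject to Ax = b, x ∈ C. -/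
/-!
Write `f = max_k ⟪w k, ·⟫` and `P` for the feasible polyhedron. The set `S` of minimizers of `f`
on `P` is again a polyhedron; let `x̄` be its element of least norm, i.e. the projection of `0`
onto `S`, so that `⟪x̄, y - x̄⟫ ≥ 0` on `S`. By Farkas' lemma `-x̄` is a nonnegative combination of
the normals of the constraints of `S` active at `x̄`, and pairing this combination with `y - x̄`
gives `⟪x̄, x̄ - y⟫ ≤ Λ (f y - f x̄)` for every `y ∈ P`, where `Λ` is the total weight carried by
the pieces of `f`. Expanding `‖y‖² ≥ ‖x̄‖² + 2 ⟪x̄, y - x̄⟫` then yields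
`f y + α/2 ‖y‖² ≥ f x̄ + α/2 ‖x̄‖² + (1 - α Λ) (f y - f x̄)`, so for `α Λ < 1` every minimizer of
the regularized problem minimizes `f`. Farkas' lemma, which also gives the existence of a minimizer
of `f` on `P`, comes from separating a point from a finitely generated cone; such cones are
closed by the conic Carathéodory theorem.
-/

open Finset Set Matrix
open scoped RealInnerProductSpace

section ConicalHull

theorem exists_linearIndepOn_sum_smul_eq {V ι : Type*} [AddCommGroup V] [Module ℝ V]
    [DecidableEq ι] (a : ι → V) (t : Finset ι) (l : ι → ℝ) (hl : ∀ i ∈ t, 0 ≤ l i) :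
    ∃ s ⊆ t, LinearIndepOn ℝ a (s : Set ι) ∧
      ∃ μ : ι → ℝ, (∀ i ∈ s, 0 ≤ μ i) ∧ ∑ i ∈ s, μ i • a i = ∑ i ∈ t, l i • a i := by
  induction t using Finset.strongInduction generalizing l with
  | H t ih =>
  by_cases hli : LinearIndepOn ℝ a (t : Set ι)
  · exact ⟨t, subset_rfl, hli, l, hl, rfl⟩
  obtain ⟨g, hg, hpos⟩ : ∃ g : ι → ℝ, ∑ i ∈ t, g i • a i = 0 ∧ ∃ i ∈ t, 0 < g i := by
    obtain ⟨g, hg, i, hi, hgi⟩ := not_linearIndepOn_finset_iff.1 hli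
    rcases hgi.lt_or_gt with hneg | hpos
    · exact ⟨-g, by simp [hg], i, hi, by simpa using hneg⟩
    · exact ⟨g, hg, i, hi, hpos⟩
  -- subtract the largest multiple of `g` that keeps the coefficients on `t` nonnegative
  obtain ⟨i₁, hi₁, hmin⟩ := exists_min_image (t.filter (0 < g ·)) (fun i => l i / g i)
    (by simpa [Finset.Nonempty] using hpos)
  rw [mem_filter] at hi₁
  set r := l i₁ / g i₁
  have hr : 0 ≤ r := div_nonneg (hl i₁ hi₁.1) hi₁.2.le
  have hnonneg : ∀ i ∈ t, 0 ≤ l i - r * g i := by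
    intro i hi
    rcases le_or_gt (g i) 0 with hgi | hgi
    · nlinarith [hl i hi]
    · have := hmin i (mem_filter.2 ⟨hi, hgi⟩)
      rw [le_div_iff₀ hgi] at this
      linarith
  have hzero : l i₁ - r * g i₁ = 0 := by rw [div_mul_cancel₀ _ hi₁.2.ne', sub_self]
  have hsum : ∑ i ∈ t, (l i - r * g i) • a i = ∑ i ∈ t, l i • a i := by
    simp [sub_smul, sum_sub_distrib, mul_smul, ← smul_sum, hg]
  obtain ⟨s, hs, hli, μ, hμ, hμsum⟩ := ih (t.erase i₁) (erase_ssubset hi₁.1) _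
    fun i hi => hnonneg i (mem_of_mem_erase hi)
  refine ⟨s, hs.trans (erase_subset _ _), hli, μ, hμ, ?_⟩
  rw [hμsum, sum_erase _ (by simp [hzero]), hsum]

theorem PointedCone.mem_hull_range_iff {F ι : Type*} [AddCommGroup F] [Module ℝ F] [Fintype ι]
    {g : ι → F} {z : F} :
    z ∈ PointedCone.hull ℝ (range g) ↔ ∃ l : ι → ℝ, (∀ i, 0 ≤ l i) ∧ ∑ i, l i • g i = z := by
  rw [Submodule.mem_span_range_iff_exists_fun]
  constructor
  · rintro ⟨l, rfl⟩
    exact ⟨fun i => l i, fun i => (l i).2, rfl⟩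
  · rintro ⟨l, hl, rfl⟩
    exact ⟨fun i => ⟨l i, hl i⟩, rfl⟩

theorem PointedCone.isClosed_hull_range {F ι : Type*} [Fintype ι] [AddCommGroup F] [Module ℝ F]
    [TopologicalSpace F] [IsTopologicalAddGroup F] [ContinuousSMul ℝ F] [T2Space F]
    (g : ι → F) : IsClosed (PointedCone.hull ℝ (range g) : Set F) := by
  classical
  have hunion : (PointedCone.hull ℝ (range g) : Set F) =
      ⋃ s : {s : Finset ι // LinearIndepOn ℝ g (s : Set ι)},
        Fintype.linearCombination ℝ (fun i : (s.1 : Set ι) => g i) '' Set.Ici 0 := by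
    ext z
    simp only [SetLike.mem_coe, mem_iUnion, mem_image, Set.mem_Ici, Fintype.linearCombination_apply]
    constructor
    · intro hz
      obtain ⟨c, hc, rfl⟩ := PointedCone.mem_hull_range_iff.1 hz
      obtain ⟨s, -, hli, μ, hμ, hsum⟩ :=
        exists_linearIndepOn_sum_smul_eq g univ c fun i _ => hc i
      refine ⟨⟨s, hli⟩, fun i => μ i, fun i => hμ i i.2, ?_⟩
      exact (sum_coe_sort s (fun i => μ i • g i)).trans hsum
    · rintro ⟨s, μ, hμ, rfl⟩
      exact Submodule.sum_mem _ fun i _ =>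
        PointedCone.smul_mem _ (hμ i) (PointedCone.subset_hull ⟨i, rfl⟩)
  rw [hunion]
  refine isClosed_iUnion_of_finite fun s => ?_
  have hinj := s.2.fintypeLinearCombination_injective
  exact (LinearMap.isClosedEmbedding_of_injective (LinearMap.ker_eq_bot.2 hinj)).isClosedMap _
    isClosed_Ici

end ConicalHull

section Polyhedron

variable {E ι κ : Type*} [NormedAddCommGroup E] [InnerProductSpace ℝ E]

def polyhedron (a : ι → E) (c : ι → ℝ) : Set E := {x | ∀ i, ⟪a i, x⟫ ≤ c i}

theorem isClosed_polyhedron (a : ι → E) (c : ι → ℝ) : IsClosed (polyhedron a c) := by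
  simpa only [polyhedron, ofPred_forall] using
    isClosed_iInter fun i => isClosed_le (continuous_const.inner continuous_id) continuous_const

theorem convex_polyhedron (a : ι → E) (c : ι → ℝ) : Convex ℝ (polyhedron a c) := by
  intro x hx y hy s t hs ht hst i
  rw [inner_add_right, real_inner_smul_right, real_inner_smul_right]
  have hc : s * c i + t * c i = c i := by rw [← add_mul, hst, one_mul]
  nlinarith [mul_le_mul_of_nonneg_left (hx i) hs, mul_le_mul_of_nonneg_left (hy i) ht]

theorem mem_polyhedron_sumElim_iff {a : ι → E} {c : ι → ℝ} {w : κ → E} {f : E → ℝ}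
    (hf : ∀ x, IsGreatest (range fun k => ⟪w k, x⟫) (f x)) {t : ℝ} {x : E} :
    x ∈ polyhedron (Sum.elim a w) (Sum.elim c fun _ => t) ↔ x ∈ polyhedron a c ∧ f x ≤ t := by
  obtain ⟨⟨k, hk⟩, hle⟩ := hf x
  simp only [polyhedron, mem_ofPred_eq, Sum.forall, Sum.elim_inl, Sum.elim_inr]
  exact and_congr_right fun _ => ⟨fun h => hk ▸ h k, fun h k => (hle ⟨k, rfl⟩).trans h⟩

variable [Fintype ι]

theorem inner_sum_smul_le_of_mem_polyhedron {a : ι → E} {c : ι → ℝ} {x : E}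
    (hx : x ∈ polyhedron a c) {l : ι → ℝ} (hl : ∀ i, 0 ≤ l i) :
    ⟪∑ i, l i • a i, x⟫ ≤ ∑ i, l i * c i := by
  simp only [sum_inner, real_inner_smul_left]
  exact sum_le_sum fun i _ => mul_le_mul_of_nonneg_left (hx i) (hl i)

open Filter Topology in
theorem eventually_add_smul_mem_polyhedron {a : ι → E} {c : ι → ℝ} {x d : E}
    (hx : x ∈ polyhedron a c) (hd : ∀ i, ⟪a i, x⟫ = c i → ⟪a i, d⟫ ≤ 0) :
    ∀ᶠ ε in 𝓝[>] (0 : ℝ), x + ε • d ∈ polyhedron a c := by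
  simp only [polyhedron, mem_ofPred_eq, eventually_all]
  intro i
  by_cases hi : ⟪a i, x⟫ = c i
  · filter_upwards [self_mem_nhdsWithin] with ε (hε : 0 < ε)
    rw [inner_add_right, real_inner_smul_right]
    nlinarith [hx i, hd i hi]
  · have hcont : Tendsto (fun ε : ℝ => ⟪a i, x + ε • d⟫) (𝓝 0) (𝓝 ⟪a i, x⟫) :=
      (continuous_const.inner (continuous_const.add (continuous_id.smul continuous_const))).tendsto'
        0 _ (by simp)
    exact (tendsto_nhdsWithin_of_tendsto_nhds hcont |>.eventually
      (gt_mem_nhds ((hx i).lt_of_ne hi))).mono fun _ => le_of_lt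

variable [FiniteDimensional ℝ E]

theorem exists_nonneg_sum_smul_eq_zero_of_polyhedron_eq_empty {a : ι → E} {c : ι → ℝ}
    (h : polyhedron a c = ∅) :
    ∃ l : ι → ℝ, (∀ i, 0 ≤ l i) ∧ ∑ i, l i • a i = 0 ∧ ∑ i, l i * c i < 0 := by
  by_contra hno
  let g : Option ι → E × ℝ := fun j => j.elim (0, 1) fun i => (a i, c i)
  have hout : ((0, -1) : E × ℝ) ∉ PointedCone.hull ℝ (range g) := by
    intro hmem
    obtain ⟨l, hl, hsum⟩ := PointedCone.mem_hull_range_iff.1 hmem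
    simp only [g, Fintype.sum_option, Option.elim_none, Option.elim_some, Prod.smul_mk, smul_zero,
      smul_eq_mul, mul_one, Prod.ext_iff, Prod.fst_add, Prod.snd_add, Prod.fst_sum, Prod.snd_sum,
      zero_add] at hsum
    exact hno ⟨fun i => l (some i), fun i => hl (some i), hsum.1, by linarith [hl none]⟩
  -- a functional separating `(0, -1)` from this closed cone, suitably rescaled, is a point of
  -- the polyhedron
  let K : ProperCone ℝ (E × ℝ) := ⟨_, PointedCone.isClosed_hull_range g⟩
  obtain ⟨φ, hφK, hφ⟩ := K.hyperplane_separation_point hout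
  set β := φ (0, 1)
  have hφ_apply (v : E) (t : ℝ) : φ (v, t) = φ (v, 0) + t * β := by
    have : ((v, t) : E × ℝ) = (v, 0) + t • (0, 1) := by ext <;> simp
    rw [this, map_add, map_smul, smul_eq_mul]
  have hβ : 0 < β := by
    have := hφ_apply 0 (-1)
    simp only [Prod.mk_zero_zero, map_zero] at this
    linarith
  set y := (InnerProductSpace.toDual ℝ E).symm (φ.comp (ContinuousLinearMap.inl ℝ E ℝ))
  have hx : -β⁻¹ • y ∈ polyhedron a c := by
    intro i
    have hi := hφK (g (some i)) (PointedCone.subset_hull ⟨some i, rfl⟩)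
    rw [hφ_apply] at hi
    rw [real_inner_smul_right, real_inner_comm, InnerProductSpace.toDual_symm_apply]
    simp only [ContinuousLinearMap.comp_apply, ContinuousLinearMap.inl_apply]
    rw [neg_mul, neg_le, ← div_eq_inv_mul, le_div_iff₀ hβ]
    simp only [Option.elim] at hi
    linarith
  simp [h] at hx

theorem exists_nonneg_sum_smul_eq_of_inner_nonpos {a : ι → E} {z : E}
    (h : ∀ d, (∀ i, ⟪a i, d⟫ ≤ 0) → ⟪z, d⟫ ≤ 0) :
    ∃ l : ι → ℝ, (∀ i, 0 ≤ l i) ∧ z = ∑ i, l i • a i := by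
  have hempty : polyhedron (fun j : Option ι => j.elim (-z) a) (fun j => j.elim (-1) 0) = ∅ := by
    refine Set.eq_empty_of_forall_notMem fun d hd => ?_
    have hz := h d fun i => hd (some i)
    have := hd none
    simp only [Option.elim, inner_neg_left] at this
    linarith
  obtain ⟨l, hl, hsum, hneg⟩ := exists_nonneg_sum_smul_eq_zero_of_polyhedron_eq_empty hempty
  simp only [Fintype.sum_option, Option.elim, smul_neg, Pi.zero_apply, mul_zero, sum_const_zero,
    add_zero, mul_neg, mul_one, neg_lt_zero] at hsum hneg
  refine ⟨fun i => l (some i) / l none, fun i => div_nonneg (hl _) (hl _), ?_⟩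
  simp only [div_eq_inv_mul, mul_smul, ← smul_sum]
  rw [eq_inv_smul_iff₀ hneg.ne', ← neg_add_eq_zero.1 hsum]

theorem exists_nonneg_inner_sub_le_sum_mul_sub {a : ι → E} {c : ι → ℝ} {x z : E}
    (hx : x ∈ polyhedron a c) (hz : ∀ y ∈ polyhedron a c, ⟪z, y - x⟫ ≤ 0) :
    ∃ l : ι → ℝ, (∀ i, 0 ≤ l i) ∧
      ∀ c' : ι → ℝ, ∀ y ∈ polyhedron a c', ⟪z, y - x⟫ ≤ ∑ i, l i * (c' i - c i) := by
  classical
  set active : ι → Prop := fun i => ⟪a i, x⟫ = c i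
  obtain ⟨μ, hμ, hzμ⟩ := exists_nonneg_sum_smul_eq_of_inner_nonpos
    (a := fun i => if active i then a i else 0) (z := z) fun d hd => by
      have hfeas := eventually_add_smul_mem_polyhedron hx fun i hi => by
        simpa [active, hi] using hd i
      obtain ⟨ε, hmem, hε⟩ := (hfeas.and self_mem_nhdsWithin).exists
      have := hz _ hmem
      rw [add_sub_cancel_left, real_inner_smul_right] at this
      exact nonpos_of_mul_nonpos_right this hε
  set l : ι → ℝ := fun i => if active i then μ i else 0
  have hzl : z = ∑ i, l i • a i := by
    rw [hzμ]
    refine sum_congr rfl fun i _ => ?_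
    by_cases hi : active i <;> simp [l, hi]
  have hslack : ⟪z, x⟫ = ∑ i, l i * c i := by
    rw [hzl, sum_inner]
    refine sum_congr rfl fun i _ => ?_
    by_cases hi : active i
    · simp only [l, if_pos hi, real_inner_smul_left, hi.symm]
    · simp [l, hi]
  have hl : ∀ i, 0 ≤ l i := fun i => by by_cases hi : active i <;> simp [l, hi, hμ i]
  refine ⟨l, hl, fun c' y hy => ?_⟩
  calc ⟪z, y - x⟫ = ⟪z, y⟫ - ⟪z, x⟫ := inner_sub_right _ _ _
    _ ≤ ∑ i, l i * c' i - ∑ i, l i * c i := by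
      rw [hslack, hzl]
      linarith [inner_sum_smul_le_of_mem_polyhedron hy hl]
    _ = ∑ i, l i * (c' i - c i) := by simp only [mul_sub, sum_sub_distrib]

variable [Fintype κ]

theorem exists_isMinOn_polyhedron_of_bddBelow {a : ι → E} {c : ι → ℝ} {w : κ → E} {f : E → ℝ}
    (hf : ∀ x, IsGreatest (range fun k => ⟪w k, x⟫) (f x)) (hne : (polyhedron a c).Nonempty)
    (hbdd : BddBelow (f '' polyhedron a c)) :
    ∃ x ∈ polyhedron a c, IsMinOn f (polyhedron a c) x := by
  set P := polyhedron a c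
  set v := sInf (f '' P)
  by_contra hno
  have hempty : polyhedron (Sum.elim a w) (Sum.elim c fun _ => v) = ∅ := by
    refine Set.eq_empty_of_forall_notMem fun x hx => ?_
    rw [mem_polyhedron_sumElim_iff hf] at hx
    exact hno ⟨x, hx.1, fun y hy => hx.2.trans (csInf_le hbdd (mem_image_of_mem f hy))⟩
  obtain ⟨l, hl, hsum, hneg⟩ := exists_nonneg_sum_smul_eq_zero_of_polyhedron_eq_empty hempty
  simp only [Fintype.sum_sum_type, Sum.elim_inl, Sum.elim_inr] at hsum hneg
  set M := ∑ k, l (Sum.inr k)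
  set δ := -(∑ i, l (Sum.inl i) * c i + M * v)
  have hgap : ∀ y ∈ P, δ ≤ M * (f y - v) := by
    intro y hy
    have h1 := inner_sum_smul_le_of_mem_polyhedron hy fun i => hl (Sum.inl i)
    have h2 : ⟪∑ k, l (Sum.inr k) • w k, y⟫ ≤ M * f y := by
      simp only [sum_inner, real_inner_smul_left, M, sum_mul]
      exact sum_le_sum fun k _ => mul_le_mul_of_nonneg_left ((hf y).2 ⟨k, rfl⟩) (hl _)
    have h3 : ⟪∑ i, l (Sum.inl i) • a i, y⟫ + ⟪∑ k, l (Sum.inr k) • w k, y⟫ = 0 := by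
      rw [← inner_add_left, hsum, inner_zero_left]
    linarith
  have hM : 0 ≤ M := sum_nonneg fun k _ => hl _
  have hδ : 0 < δ := by
    rw [← sum_mul] at hneg
    linarith
  obtain ⟨_, ⟨y, hy, rfl⟩, hlt⟩ := exists_lt_of_csInf_lt (hne.image f)
    (lt_add_of_pos_right v (div_pos hδ (by linarith : 0 < M + 1)))
  have hvy : v ≤ f y := csInf_le hbdd (mem_image_of_mem f hy)
  rw [← sub_lt_iff_lt_add', lt_div_iff₀ (by linarith)] at hlt
  nlinarith [hgap y hy]

theorem exists_pos_isMinOn_of_isMinOn_add_norm_sq {a : ι → E} {c : ι → ℝ} {w : κ → E}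
    {f : E → ℝ} (hf : ∀ x, IsGreatest (range fun k => ⟪w k, x⟫) (f x))
    (hne : (polyhedron a c).Nonempty) (hbdd : BddBelow (f '' polyhedron a c)) :
    ∃ αbar > (0 : ℝ), ∀ α : ℝ, 0 < α → α ≤ αbar → ∀ x ∈ polyhedron a c,
      IsMinOn (fun y => f y + α / 2 * ‖y‖ ^ 2) (polyhedron a c) x →
      IsMinOn f (polyhedron a c) x := by
  obtain ⟨xs, hxs, hmin⟩ := exists_isMinOn_polyhedron_of_bddBelow hf hne hbdd
  set S := polyhedron (Sum.elim a w) (Sum.elim c fun _ => f xs)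
  have hxsS : xs ∈ S := (mem_polyhedron_sumElim_iff hf).2 ⟨hxs, le_rfl⟩
  -- `xb` is the least-norm minimizer of `f` on the polyhedron
  obtain ⟨xb, hxbS, hxb⟩ := exists_norm_eq_iInf_of_complete_convex ⟨xs, hxsS⟩
    (isClosed_polyhedron _ _).isComplete (convex_polyhedron _ _) 0
  have hproj : ∀ y ∈ S, ⟪-xb, y - xb⟫ ≤ 0 := by
    simpa using (norm_eq_iInf_iff_real_inner_le_zero (convex_polyhedron _ _) hxbS).1 hxb
  obtain ⟨hxbP, hfxb⟩ := (mem_polyhedron_sumElim_iff hf).1 hxbS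
  obtain ⟨l, hl, hbound⟩ := exists_nonneg_inner_sub_le_sum_mul_sub hxbS hproj
  set Λ := ∑ k, l (Sum.inr k)
  have hΛ : 0 ≤ Λ := sum_nonneg fun k _ => hl _
  have hkey : ∀ y ∈ polyhedron a c, ⟪xb, xb - y⟫ ≤ Λ * (f y - f xs) := by
    intro y hy
    have := hbound (Sum.elim c fun _ => f y) y ((mem_polyhedron_sumElim_iff hf).2 ⟨hy, le_rfl⟩)
    simpa [Fintype.sum_sum_type, inner_neg_left, ← sum_mul, Λ, ← inner_neg_right] using this
  refine ⟨1 / (Λ + 1), by positivity, fun α hα hαle x hx hxmin y hy => ?_⟩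
  have h1 : f x + α / 2 * ‖x‖ ^ 2 ≤ f xb + α / 2 * ‖xb‖ ^ 2 := hxmin hxbP
  have h2 : ‖xb‖ ^ 2 - 2 * ⟪xb, xb - x⟫ ≤ ‖x‖ ^ 2 := by
    have := norm_sub_sq_real x xb
    rw [inner_sub_right, real_inner_self_eq_norm_sq, real_inner_comm]
    nlinarith [sq_nonneg ‖x - xb‖]
  have h3 := hkey x hx
  have hαΛ : α * Λ < 1 := by
    rw [le_div_iff₀ (by positivity)] at hαle
    nlinarith
  have hfx : f x ≤ f xs := by nlinarith
  exact hfx.trans (hmin hy)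

end Polyhedron

theorem isGreatest_sum_sign_mul {ι : Type*} [Fintype ι] (v : ι → ℝ) :
    IsGreatest (range fun s : ι → SignType => ∑ i, (s i : ℝ) * v i) (∑ i, |v i|) := by
  refine ⟨⟨fun i => SignType.sign (v i), by simp only [sign_mul_self]⟩, ?_⟩
  rintro _ ⟨s, rfl⟩
  refine sum_le_sum fun i _ => ?_
  rcases s i with _ | _ | _ <;> simp [le_abs_self, neg_le_abs]

section EuclideanSpace

variable {n : Type*} [Fintype n]

theorem EuclideanSpace.inner_toLp_eq_dotProduct (u : n → ℝ) (y : EuclideanSpace ℝ n) :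
    ⟪WithLp.toLp 2 u, y⟫ = u ⬝ᵥ y.ofLp := by
  simp [EuclideanSpace.inner_eq_star_dotProduct, dotProduct_comm]

theorem EuclideanSpace.mem_polyhedron_rows_iff {p q : Type*} (C : Matrix p n ℝ) (d : p → ℝ)
    (A : Matrix q n ℝ) (b : q → ℝ) (y : EuclideanSpace ℝ n) :
    y ∈ polyhedron (Sum.elim (fun i => WithLp.toLp 2 (C i))
        (Sum.elim (fun k => WithLp.toLp 2 (A k)) fun k => WithLp.toLp 2 (-A k)))
      (Sum.elim d (Sum.elim b (-b))) ↔
      (∀ i, (C *ᵥ y.ofLp) i ≤ d i) ∧ A *ᵥ y.ofLp = b := by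
  simp only [polyhedron, mem_ofPred_eq, Sum.forall, Sum.elim_inl, Sum.elim_inr,
    inner_toLp_eq_dotProduct, neg_dotProduct, Pi.neg_apply, neg_le_neg_iff, le_antisymm_iff]
  rfl

end EuclideanSpace

/-- Exact ℓ₂-regularization of the generalized basis pursuit problem
`min ‖Ex‖₁ s.t. Ax = b, x ∈ 𝒞`: for all sufficiently small `α > 0`, every
minimizer of `‖Ex‖₁ + (α/2)‖x‖₂²` over the feasible set is a minimizer of
`‖Ex‖₁` over the feasible set. -/
theorem stmt7 {m N r ℓc : ℕ}
    (A : Matrix (Fin m) (Fin N) ℝ) (E : Matrix (Fin r) (Fin N) ℝ)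
    (b : Fin m → ℝ) (Cm : Matrix (Fin ℓc) (Fin N) ℝ) (d : Fin ℓc → ℝ)
    (𝒞 : Set (Fin N → ℝ)) (h𝒞 : 𝒞 = {x | ∀ i, Cm.mulVec x i ≤ d i})
    (hfeas : ∃ x ∈ 𝒞, A.mulVec x = b) :
    ∃ αbar > (0 : ℝ), ∀ α : ℝ, 0 < α → α ≤ αbar →
      ∀ x, (x ∈ 𝒞 ∧ A.mulVec x = b ∧
        ∀ y, y ∈ 𝒞 → A.mulVec y = b →
          (∑ i, |E.mulVec x i|) + α / 2 * (∑ j, (x j) ^ 2) ≤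
            (∑ i, |E.mulVec y i|) + α / 2 * (∑ j, (y j) ^ 2)) →
      ∀ y, y ∈ 𝒞 → A.mulVec y = b →
        (∑ i, |E.mulVec x i|) ≤ (∑ i, |E.mulVec y i|) := by
  subst h𝒞
  have hmem := EuclideanSpace.mem_polyhedron_rows_iff Cm d A b
  have hf (y : EuclideanSpace ℝ (Fin N)) : IsGreatest
      (range fun s : Fin r → SignType => ⟪WithLp.toLp 2 ((fun i => (s i : ℝ)) ᵥ* E), y⟫)
      (∑ i, |(E *ᵥ y.ofLp) i|) := by
    simp only [EuclideanSpace.inner_toLp_eq_dotProduct, ← dotProduct_mulVec]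
    exact isGreatest_sum_sign_mul (E *ᵥ y.ofLp)
  obtain ⟨x₀, hx₀C, hx₀A⟩ := hfeas
  obtain ⟨αbar, hαbar, hreg⟩ := exists_pos_isMinOn_of_isMinOn_add_norm_sq hf
    ⟨.toLp 2 x₀, (hmem _).2 ⟨hx₀C, hx₀A⟩⟩ ⟨0, by rintro _ ⟨y, -, rfl⟩; positivity⟩
  refine ⟨αbar, hαbar, fun α hα hαle x ⟨hxC, hxA, hxmin⟩ y hyC hyA => ?_⟩
  refine hreg α hα hαle (.toLp 2 x) ((hmem _).2 ⟨hxC, hxA⟩) (fun y' hy' => ?_)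
    ((hmem _).2 ⟨hyC, hyA⟩)
  obtain ⟨hy'C, hy'A⟩ := (hmem y').1 hy'
  simpa [EuclideanSpace.real_norm_sq_eq] using hxmin y'.ofLp hy'C hy'A
end
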